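/- The map π_St from the Stiefel manifold to the Grassmann manifold defined by π_St(A) = AA^T is √2-Lipschitz with respect to the Hilbert–Schmidt norm: for all A, A' with A^T A = A'^T A' = I_d, ‖AA^T − A'A'^T‖_HS ≤ √2 ‖A − A'‖_HS. -/

import Mathlib

/-!
Write `M = Aᵀ A'`. Orthonormality of the columns gives `‖A - A'‖² = 2 (d - tr M)` and
`‖A Aᵀ - A' A'ᵀ‖² = 2 (d - ‖M‖²)`, so the claim reduces to `2 tr M ≤ d + ‖M‖²`,
which is `‖1 - M‖² ≥ 0`.
-/

open Matrix

/-- Hilbert–Schmidt (Frobenius) norm of a real matrix. -/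
noncomputable def hsNorm {n m : ℕ} (M : Matrix (Fin n) (Fin m) ℝ) : ℝ :=
  Real.sqrt (Matrix.trace (Mᵀ * M))

namespace Matrix

variable {m n : Type*} [Fintype m] [Fintype n]

theorem trace_transpose_mul_self_nonneg (M : Matrix m n ℝ) : 0 ≤ trace (Mᵀ * M) :=
  (posSemidef_conjTranspose_mul_self M).trace_nonneg

variable [DecidableEq n]

theorem two_mul_trace_le_card_add_trace_transpose_mul_self (M : Matrix n n ℝ) :
    2 * trace M ≤ Fintype.card n + trace (Mᵀ * M) := by
  have h := trace_transpose_mul_self_nonneg (1 - M)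
  simp only [transpose_sub, transpose_one, sub_mul, mul_sub, one_mul, mul_one, trace_sub,
    trace_one, trace_transpose] at h
  linarith

variable {R : Type*} [CommRing R]

theorem trace_transpose_mul_self_sub_of_orthonormal {A B : Matrix m n R}
    (hA : Aᵀ * A = 1) (hB : Bᵀ * B = 1) :
    trace ((A - B)ᵀ * (A - B)) = 2 * (Fintype.card n - trace (Aᵀ * B)) := by
  have hBA : trace (Bᵀ * A) = trace (Aᵀ * B) := by
    rw [← trace_transpose, transpose_mul, transpose_transpose]
  simp only [transpose_sub, Matrix.sub_mul, Matrix.mul_sub, trace_sub, hA, hB, hBA, trace_one]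
  ring

theorem trace_transpose_mul_self_sub_mul_transpose_of_orthonormal {A B : Matrix m n R}
    (hA : Aᵀ * A = 1) (hB : Bᵀ * B = 1) :
    trace ((A * Aᵀ - B * Bᵀ)ᵀ * (A * Aᵀ - B * Bᵀ)) =
      2 * (Fintype.card n - trace ((Aᵀ * B)ᵀ * (Aᵀ * B))) := by
  have hproj {C : Matrix m n R} (hC : Cᵀ * C = 1) :
      trace ((C * Cᵀ)ᵀ * (C * Cᵀ)) = Fintype.card n := by
    rw [transpose_mul, transpose_transpose, Matrix.mul_assoc, ← Matrix.mul_assoc Cᵀ, hC,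
      Matrix.one_mul, trace_mul_comm, hC, trace_one]
  have hcross : trace ((A * Aᵀ)ᵀ * (B * Bᵀ)) = trace ((Aᵀ * B)ᵀ * (Aᵀ * B)) := by
    conv_rhs => rw [trace_mul_comm]
    simp only [transpose_mul, transpose_transpose, Matrix.mul_assoc]
    rw [trace_mul_comm A]
    simp only [Matrix.mul_assoc]
  have hcross' : trace ((B * Bᵀ)ᵀ * (A * Aᵀ)) = trace ((A * Aᵀ)ᵀ * (B * Bᵀ)) := by
    rw [← trace_transpose, transpose_mul, transpose_transpose]
  simp only [transpose_sub, Matrix.sub_mul, Matrix.mul_sub, trace_sub, hproj hA, hproj hB,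
    hcross', hcross]
  ring

end Matrix

/-- The map `A ↦ A * Aᵀ` from the Stiefel manifold to the Grassmann manifold is
`√2`-Lipschitz with respect to the Hilbert–Schmidt norm. -/
theorem piSt_sqrt_two_lipschitz {n d : ℕ} (A A' : Matrix (Fin n) (Fin d) ℝ)
    (hA : Aᵀ * A = 1) (hA' : A'ᵀ * A' = 1) :
    hsNorm (A * Aᵀ - A' * A'ᵀ) ≤ Real.sqrt 2 * hsNorm (A - A') := by
  rw [hsNorm, hsNorm, ← Real.sqrt_mul zero_le_two]
  apply Real.sqrt_le_sqrt
  rw [trace_transpose_mul_self_sub_mul_transpose_of_orthonormal hA hA',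
    trace_transpose_mul_self_sub_of_orthonormal hA hA']
  linarith [two_mul_trace_le_card_add_trace_transpose_mul_self (Aᵀ * A')]
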